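/- arXiv:2507.21185 — 2 statements merged into one kernel-verified Lean document; each statement's English description precedes it below -/
import Mathlib

section
/- (G-fractional Picone inequality) Let G be an N-function whose derivative g = G' satisfies p⁻ ≤ t g(t)/G(t) ≤ p⁺ for all t > 0, and let 1 < q ≤ p⁻. Then there exists a constant C = C(p⁻, p⁺, G(1)) > 0 such that for all real numbers a, b > 0 and c, d ≥ 0: g(|a − b|)·((a − b)/|a − b|)·(c^q/a^{q−1} − d^q/b^{q−1}) ≤ C · max{ (G(|c − d|)/G(1))^{q/p⁺}, (G(|c − d|)/G(1))^{q/p⁻} } · max{ (G(|a − b|)/G(1))^{(p⁻ − q)/p⁺}, (G(|a − b|)/G(1))^{(p⁺ − q)/p⁻} }, where the left-hand side is interpreted as 0 when a = b. -/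
/-! Two ingredients. First, `x ↦ x ^ q` is convex, so its perspective `(x, u) ↦ x ^ q / u ^ (q - 1)`
is subadditive; applied to `c ≤ |c - d| + d` and `a = (a - b) + b` (for `a > b`) this gives
`sign (a - b) (c^q / a^(q-1) - d^q / b^(q-1)) ≤ |c - d|^q / |a - b|^(q-1)`.
Second, `p⁻ ≤ t g(t) / G(t) ≤ p⁺` says that `G t / t^p⁻` is nondecreasing and `G t / t^p⁺` is
nonincreasing, whence `G 1 · min (t^p⁻, t^p⁺) ≤ G t ≤ G 1 · max (t^p⁻, t^p⁺)`. Inverting these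
bounds controls `|c - d|^q` and `G |a - b| / |a - b|^q` by the two maxima, and
`g t ≤ p⁺ G t / t` closes the estimate with `C = p⁺ G 1`. -/

open MeasureTheory Filter Set

noncomputable section

/-- An N-function: continuous, convex on `[0,∞)`, vanishing exactly at `0`,
with `G t / t → 0` as `t → 0⁺` and `G t / t → ∞` as `t → ∞`. -/
def IsNFunction (G : ℝ → ℝ) : Prop :=
  ContinuousOn G (Set.Ici 0) ∧ ConvexOn ℝ (Set.Ici 0) G ∧
  (∀ t : ℝ, 0 ≤ t → (G t = 0 ↔ t = 0)) ∧
  Tendsto (fun t => G t / t) (nhdsWithin 0 (Set.Ioi 0)) (nhds 0) ∧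
  Tendsto (fun t => G t / t) atTop atTop

open Topology

namespace Real

theorem add_rpow_div_add_rpow_le {q x y u v : ℝ} (hq : 1 ≤ q) (hx : 0 ≤ x) (hy : 0 ≤ y)
    (hu : 0 < u) (hv : 0 < v) :
    (x + y) ^ q / (u + v) ^ (q - 1) ≤ x ^ q / u ^ (q - 1) + y ^ q / v ^ (q - 1) := by
  have huv : 0 < u + v := by positivity
  have hweight : ∀ {w z : ℝ}, 0 < w → 0 ≤ z →
      w / (u + v) * ((u + v) / w * z) ^ q = (u + v) ^ (q - 1) * (z ^ q / w ^ (q - 1)) := by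
    intro w z hw hz
    have hpow : ((u + v) / w) ^ q = ((u + v) / w) ^ (q - 1) * ((u + v) / w) := by
      rw [rpow_sub_one (by positivity), div_mul_cancel₀ _ (by positivity)]
    rw [mul_rpow (by positivity) hz, hpow, div_rpow huv.le hw.le]
    field_simp
  have hconv := (convexOn_rpow hq).2 (mem_Ici.2 (by positivity : 0 ≤ (u + v) / u * x))
    (mem_Ici.2 (by positivity : 0 ≤ (u + v) / v * y))
    (by positivity : 0 ≤ u / (u + v)) (by positivity : 0 ≤ v / (u + v)) (by field_simp)
  simp only [smul_eq_mul, hweight hu hx, hweight hv hy] at hconv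
  rw [show u / (u + v) * ((u + v) / u * x) + v / (u + v) * ((u + v) / v * y) = x + y by
    field_simp] at hconv
  rw [div_le_iff₀' (by positivity)]
  linarith

theorem sign_sub_mul_rpow_div_sub_le {q a b c d : ℝ} (hq : 1 ≤ q) (ha : 0 < a) (hb : 0 < b)
    (hc : 0 ≤ c) (hd : 0 ≤ d) (hab : a ≠ b) :
    sign (a - b) * (c ^ q / a ^ (q - 1) - d ^ q / b ^ (q - 1))
      ≤ |c - d| ^ q / |a - b| ^ (q - 1) := by
  wlog hba : b < a generalizing a b c d
  · have := this hb ha hd hc hab.symm (lt_of_le_of_ne (not_lt.1 hba) hab)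
    rwa [abs_sub_comm d c, abs_sub_comm b a, ← neg_sub a b, sign_neg, neg_mul, ← mul_neg,
      neg_sub] at this
  have hsplit : c ^ q / a ^ (q - 1) ≤ |c - d| ^ q / (a - b) ^ (q - 1) + d ^ q / b ^ (q - 1) :=
    calc c ^ q / a ^ (q - 1) ≤ (|c - d| + d) ^ q / ((a - b) + b) ^ (q - 1) := by
          rw [sub_add_cancel]
          gcongr
          linarith [le_abs_self (c - d)]
      _ ≤ _ := add_rpow_div_add_rpow_le hq (abs_nonneg _) hd (sub_pos.2 hba) hb
  rw [sign_of_pos (sub_pos.2 hba), one_mul, abs_of_pos (sub_pos.2 hba)]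
  linarith

theorem rpow_le_max_rpow_of_min_rpow_le {t X q pm pp : ℝ} (ht : 0 ≤ t) (hq : 0 ≤ q)
    (hpm : 0 < pm) (hpmpp : pm ≤ pp) (hX : min (t ^ pm) (t ^ pp) ≤ X) :
    t ^ q ≤ max (X ^ (q / pp)) (X ^ (q / pm)) := by
  have hroot : ∀ {p : ℝ}, 0 < p → t ^ p ≤ X → t ^ q ≤ X ^ (q / p) := fun {p} hp htX => by
    calc t ^ q = (t ^ p) ^ (q / p) := by rw [← rpow_mul ht, mul_div_cancel₀ _ hp.ne']
      _ ≤ X ^ (q / p) := by gcongr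
  rcases le_total t 1 with h1 | h1
  · rw [min_eq_right (rpow_le_rpow_of_exponent_ge' ht h1 hpm.le hpmpp)] at hX
    exact le_max_of_le_left (hroot (hpm.trans_le hpmpp) hX)
  · rw [min_eq_left (rpow_le_rpow_of_exponent_le h1 hpmpp)] at hX
    exact le_max_of_le_right (hroot hpm hX)

theorem le_rpow_mul_max_rpow_of_min_rpow_le {t X q pm pp : ℝ} (ht : 0 < t) (hq : 0 < q)
    (hqpm : q ≤ pm) (hpmpp : pm ≤ pp) (hlow : min (t ^ pm) (t ^ pp) ≤ X)
    (hup : X ≤ max (t ^ pm) (t ^ pp)) :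
    X ≤ t ^ q * max (X ^ ((pm - q) / pp)) (X ^ ((pp - q) / pm)) := by
  have hX : 0 < X := lt_of_lt_of_le (by positivity) hlow
  have hpm : 0 < pm := hq.trans_le hqpm
  have hsplit : ∀ {p : ℝ}, 0 < p → X ≤ t ^ p → X ≤ t ^ q * X ^ ((p - q) / p) :=
    fun {p} hp htX => by
      calc X = X ^ (q / p) * X ^ ((p - q) / p) := by
            rw [← rpow_add hX, ← add_div, add_sub_cancel, div_self hp.ne', rpow_one]
        _ ≤ (t ^ p) ^ (q / p) * X ^ ((p - q) / p) := by gcongr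
        _ = t ^ q * X ^ ((p - q) / p) := by rw [← rpow_mul ht.le, mul_div_cancel₀ _ hp.ne']
  rcases le_total t 1 with h1 | h1
  · rw [max_eq_left (rpow_le_rpow_of_exponent_ge ht h1 hpmpp)] at hup
    have hX1 : X ≤ 1 := hup.trans (rpow_le_one ht.le h1 hpm.le)
    calc X ≤ t ^ q * X ^ ((pm - q) / pm) := hsplit hpm hup
      _ ≤ t ^ q * X ^ ((pm - q) / pp) := by
          gcongr t ^ q * ?_
          exact rpow_le_rpow_of_exponent_ge hX hX1 (by gcongr)
      _ ≤ _ := by gcongr; exact le_max_left _ _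
  · rw [max_eq_right (rpow_le_rpow_of_exponent_le h1 hpmpp)] at hup
    rw [min_eq_left (rpow_le_rpow_of_exponent_le h1 hpmpp)] at hlow
    have hX1 : 1 ≤ X := (one_le_rpow h1 hpm.le).trans hlow
    calc X ≤ t ^ q * X ^ ((pp - q) / pp) := hsplit (hpm.trans_le hpmpp) hup
      _ ≤ t ^ q * X ^ ((pp - q) / pm) := by
          gcongr t ^ q * ?_
          exact rpow_le_rpow_of_exponent_le hX1 (by gcongr; linarith)
      _ ≤ _ := by gcongr; exact le_max_right _ _

end Real

theorem ConvexOn.nonneg_of_tendsto_div_nhdsGT_zero {f : ℝ → ℝ} (hf : ConvexOn ℝ (Ici 0) f)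
    (hf0 : f 0 = 0) (hlim : Tendsto (fun t => f t / t) (𝓝[>] 0) (𝓝 0)) {t : ℝ} (ht : 0 ≤ t) :
    0 ≤ f t := by
  rcases ht.eq_or_lt with rfl | ht
  · exact hf0.ge
  have hslope : ∀ s ∈ Ioo 0 t, f s / s ≤ f t / t := fun s hs => by
    simpa [hf0] using hf.secant_mono self_mem_Ici hs.1.le ht.le hs.1.ne' ht.ne' hs.2.le
  have hslope_nonneg : 0 ≤ f t / t :=
    le_of_tendsto hlim (Filter.mem_of_superset (Ioo_mem_nhdsGT ht) hslope)
  simpa [div_mul_cancel₀ _ ht.ne'] using mul_nonneg hslope_nonneg ht.le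

namespace IsNFunction

variable {G : ℝ → ℝ}

theorem apply_zero (hG : IsNFunction G) : G 0 = 0 := (hG.2.2.1 0 le_rfl).2 rfl

theorem nonneg (hG : IsNFunction G) {t : ℝ} (ht : 0 ≤ t) : 0 ≤ G t :=
  ConvexOn.nonneg_of_tendsto_div_nhdsGT_zero hG.2.1 hG.apply_zero hG.2.2.2.1 ht

theorem pos (hG : IsNFunction G) {t : ℝ} (ht : 0 < t) : 0 < G t :=
  (hG.nonneg ht.le).lt_of_ne fun h => ht.ne' ((hG.2.2.1 t ht.le).1 h.symm)

end IsNFunction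

section Growth

variable {G g : ℝ → ℝ} {p pm pp : ℝ}

theorem monotoneOn_div_rpow_of_mul_le (hGg : ∀ t, 0 < t → HasDerivAt G (g t) t)
    (hg : ∀ t, 0 < t → p * G t ≤ t * g t) :
    MonotoneOn (fun t => G t / t ^ p) (Ioi 0) := by
  have hderiv : ∀ t ∈ Ioi (0 : ℝ), HasDerivAt (fun t => G t / t ^ p)
      ((g t * t ^ p - G t * (p * t ^ (p - 1))) / (t ^ p) ^ 2) t := fun t ht =>
    (hGg t ht).div (Real.hasDerivAt_rpow_const (Or.inl (ne_of_gt ht)))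
      (Real.rpow_pos_of_pos ht p).ne'
  refine monotoneOn_of_hasDerivWithinAt_nonneg (convex_Ioi 0)
    (fun t ht => (hderiv t ht).continuousAt.continuousWithinAt)
    (fun t ht => (hderiv t (interior_subset ht)).hasDerivWithinAt) fun t ht => ?_
  rw [interior_Ioi] at ht
  have ht' : (0 : ℝ) < t := ht
  have hnum : g t * t ^ p - G t * (p * t ^ (p - 1)) = t ^ (p - 1) * (t * g t - p * G t) := by
    rw [Real.rpow_sub_one ht'.ne']
    field_simp
  rw [hnum]
  have := sub_nonneg.2 (hg t ht')
  positivity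

theorem antitoneOn_div_rpow_of_le_mul (hGg : ∀ t, 0 < t → HasDerivAt G (g t) t)
    (hg : ∀ t, 0 < t → t * g t ≤ p * G t) :
    AntitoneOn (fun t => G t / t ^ p) (Ioi 0) := by
  have hneg := monotoneOn_div_rpow_of_mul_le (G := -G) (g := -g) (p := p)
    (fun t ht => (hGg t ht).neg) fun t ht => by simpa using hg t ht
  intro x hx y hy hxy
  simpa [neg_div] using hneg hx hy hxy

theorem min_rpow_mul_le_of_monotoneOn_of_antitoneOn
    (hmono : MonotoneOn (fun t => G t / t ^ pm) (Ioi 0))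
    (hanti : AntitoneOn (fun t => G t / t ^ pp) (Ioi 0))
    (hG1 : 0 ≤ G 1) {t : ℝ} (ht : 0 < t) :
    min (t ^ pm) (t ^ pp) * G 1 ≤ G t := by
  rcases le_total t 1 with h1 | h1
  · have := hanti ht (mem_Ioi.2 one_pos) h1
    simp only [Real.one_rpow, div_one, le_div_iff₀ (Real.rpow_pos_of_pos ht pp)] at this
    calc min (t ^ pm) (t ^ pp) * G 1 ≤ t ^ pp * G 1 := by gcongr; exact min_le_right _ _
      _ ≤ G t := by linarith
  · have := hmono (mem_Ioi.2 one_pos) (zero_lt_one.trans_le h1) h1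
    simp only [Real.one_rpow, div_one, le_div_iff₀ (Real.rpow_pos_of_pos ht pm)] at this
    calc min (t ^ pm) (t ^ pp) * G 1 ≤ t ^ pm * G 1 := by gcongr; exact min_le_left _ _
      _ ≤ G t := by linarith

theorem le_max_rpow_mul_of_monotoneOn_of_antitoneOn
    (hmono : MonotoneOn (fun t => G t / t ^ pm) (Ioi 0))
    (hanti : AntitoneOn (fun t => G t / t ^ pp) (Ioi 0))
    (hG1 : 0 ≤ G 1) {t : ℝ} (ht : 0 < t) :
    G t ≤ max (t ^ pm) (t ^ pp) * G 1 := by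
  rcases le_total t 1 with h1 | h1
  · have := hmono ht (mem_Ioi.2 one_pos) h1
    simp only [Real.one_rpow, div_one, div_le_iff₀ (Real.rpow_pos_of_pos ht pm)] at this
    calc G t ≤ t ^ pm * G 1 := by linarith
      _ ≤ _ := by gcongr; exact le_max_left _ _
  · have := hanti (mem_Ioi.2 one_pos) (zero_lt_one.trans_le h1) h1
    simp only [Real.one_rpow, div_one, div_le_iff₀ (Real.rpow_pos_of_pos ht pp)] at this
    calc G t ≤ t ^ pp * G 1 := by linarith
      _ ≤ _ := by gcongr; exact le_max_right _ _

theorem rpow_le_max_of_monotoneOn_of_antitoneOn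
    (hmono : MonotoneOn (fun t => G t / t ^ pm) (Ioi 0))
    (hanti : AntitoneOn (fun t => G t / t ^ pp) (Ioi 0))
    (hG0 : 0 ≤ G 0) (hG1 : 0 < G 1) {q : ℝ} (hq : 0 ≤ q) (hpm : 0 < pm) (hpmpp : pm ≤ pp)
    {s : ℝ} (hs : 0 ≤ s) :
    s ^ q ≤ max ((G s / G 1) ^ (q / pp)) ((G s / G 1) ^ (q / pm)) := by
  refine Real.rpow_le_max_rpow_of_min_rpow_le hs hq hpm hpmpp ((le_div_iff₀ hG1).2 ?_)
  rcases hs.eq_or_lt with rfl | hs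
  · calc min (0 ^ pm) (0 ^ pp) * G 1 ≤ 0 ^ pm * G 1 := by gcongr; exact min_le_left _ _
      _ ≤ G 0 := by rwa [Real.zero_rpow hpm.ne', zero_mul]
  · exact min_rpow_mul_le_of_monotoneOn_of_antitoneOn hmono hanti hG1.le hs

theorem div_rpow_le_mul_max_of_monotoneOn_of_antitoneOn
    (hmono : MonotoneOn (fun t => G t / t ^ pm) (Ioi 0))
    (hanti : AntitoneOn (fun t => G t / t ^ pp) (Ioi 0))
    (hG1 : 0 < G 1) {q : ℝ} (hq : 0 < q) (hqpm : q ≤ pm) (hpmpp : pm ≤ pp)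
    {t : ℝ} (ht : 0 < t) :
    G t / t ^ q ≤ G 1 * max ((G t / G 1) ^ ((pm - q) / pp)) ((G t / G 1) ^ ((pp - q) / pm)) := by
  have hX := Real.le_rpow_mul_max_rpow_of_min_rpow_le ht hq hqpm hpmpp
    ((le_div_iff₀ hG1).2 (min_rpow_mul_le_of_monotoneOn_of_antitoneOn hmono hanti hG1.le ht))
    ((div_le_iff₀ hG1).2 (le_max_rpow_mul_of_monotoneOn_of_antitoneOn hmono hanti hG1.le ht))
  rw [div_le_iff₀ hG1, mul_comm] at hX
  rw [div_le_iff₀ (by positivity)]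
  linarith

theorem mul_rpow_div_rpow_le_of_monotoneOn_of_antitoneOn
    (hmono : MonotoneOn (fun t => G t / t ^ pm) (Ioi 0))
    (hanti : AntitoneOn (fun t => G t / t ^ pp) (Ioi 0))
    (hG0 : 0 ≤ G 0) (hG1 : 0 < G 1) {q : ℝ} (hq : 0 < q) (hqpm : q ≤ pm) (hpmpp : pm ≤ pp)
    {s t : ℝ} (hs : 0 ≤ s) (ht : 0 < t) (hg : t * g t ≤ pp * G t) :
    g t * (s ^ q / t ^ (q - 1))
      ≤ pp * G 1 * max ((G s / G 1) ^ (q / pp)) ((G s / G 1) ^ (q / pm))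
          * max ((G t / G 1) ^ ((pm - q) / pp)) ((G t / G 1) ^ ((pp - q) / pm)) := by
  have hpp : 0 < pp := hq.trans_le (hqpm.trans hpmpp)
  set Ms := max ((G s / G 1) ^ (q / pp)) ((G s / G 1) ^ (q / pm))
  set Mt := max ((G t / G 1) ^ ((pm - q) / pp)) ((G t / G 1) ^ ((pp - q) / pm))
  have hGt : 0 < G t := lt_of_lt_of_le (by positivity)
    (min_rpow_mul_le_of_monotoneOn_of_antitoneOn hmono hanti hG1.le ht)
  have hMt : G t / t ^ q ≤ G 1 * Mt :=
    div_rpow_le_mul_max_of_monotoneOn_of_antitoneOn hmono hanti hG1 hq hqpm hpmpp ht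
  have hMs : s ^ q ≤ Ms := rpow_le_max_of_monotoneOn_of_antitoneOn hmono hanti hG0 hG1 hq.le
    (hq.trans_le hqpm) hpmpp hs
  have hMt0 : 0 ≤ G 1 * Mt := (by positivity : 0 ≤ G t / t ^ q).trans hMt
  calc g t * (s ^ q / t ^ (q - 1)) = t * g t * (s ^ q / t ^ q) := by
        rw [Real.rpow_sub_one ht.ne']
        field_simp
    _ ≤ pp * G t * (s ^ q / t ^ q) := by gcongr
    _ = pp * (G t / t ^ q) * s ^ q := by ring
    _ ≤ pp * (G 1 * Mt) * Ms := by gcongr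
    _ = pp * G 1 * Ms * Mt := by ring

end Growth

/-- G-fractional Picone inequality: if `G` is an N-function whose derivative
`g = G'` satisfies `p⁻ ≤ t g(t)/G(t) ≤ p⁺` for all `t > 0`, and `1 < q ≤ p⁻`, then there
is `C = C(p⁻,p⁺,G(1)) > 0` such that for all `a, b > 0` and `c, d ≥ 0`,
`g(|a−b|) sign(a−b) (c^q/a^{q−1} − d^q/b^{q−1})` is bounded by
`C · max{(G|c−d|/G 1)^{q/p⁺}, (G|c−d|/G 1)^{q/p⁻}} ·
 max{(G|a−b|/G 1)^{(p⁻−q)/p⁺}, (G|a−b|/G 1)^{(p⁺−q)/p⁻}}`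
(the left-hand side being `0` when `a = b`, since `sign 0 = 0`). -/
theorem G_fractional_Picone_inequality
    (G g : ℝ → ℝ) (pm pp : ℝ) (hG : IsNFunction G)
    (hGg : ∀ t : ℝ, 0 < t → HasDerivAt G (g t) t)
    (hbound : ∀ t : ℝ, 0 < t → pm ≤ t * g t / G t ∧ t * g t / G t ≤ pp)
    (q : ℝ) (hq1 : 1 < q) (hqpm : q ≤ pm) :
    ∃ C : ℝ, 0 < C ∧ ∀ a b c d : ℝ, 0 < a → 0 < b → 0 ≤ c → 0 ≤ d →
      g |a - b| * Real.sign (a - b) * (c ^ q / a ^ (q - 1) - d ^ q / b ^ (q - 1))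
        ≤ C * max ((G |c - d| / G 1) ^ (q / pp)) ((G |c - d| / G 1) ^ (q / pm))
            * max ((G |a - b| / G 1) ^ ((pm - q) / pp)) ((G |a - b| / G 1) ^ ((pp - q) / pm)) := by
  have hmul : ∀ t, 0 < t → pm * G t ≤ t * g t ∧ t * g t ≤ pp * G t := fun t ht =>
    ⟨(le_div_iff₀ (hG.pos ht)).1 (hbound t ht).1, (div_le_iff₀ (hG.pos ht)).1 (hbound t ht).2⟩
  have hpmpp : pm ≤ pp := (hbound 1 one_pos).1.trans (hbound 1 one_pos).2
  have hmono := monotoneOn_div_rpow_of_mul_le hGg fun t ht => (hmul t ht).1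
  have hanti := antitoneOn_div_rpow_of_le_mul hGg fun t ht => (hmul t ht).2
  have hG1 : 0 < G 1 := hG.pos one_pos
  have hpp : 0 < pp := by linarith
  refine ⟨pp * G 1, by positivity, fun a b c d ha hb hc hd => ?_⟩
  rcases eq_or_ne a b with rfl | hab
  · have := hG.nonneg (abs_nonneg (c - d))
    simp only [sub_self, abs_zero, hG.apply_zero, zero_div, Real.sign_zero, mul_zero, zero_mul]
    positivity
  have ht : 0 < |a - b| := abs_pos.2 (sub_ne_zero.2 hab)
  have hgt : 0 ≤ g |a - b| := by nlinarith [(hmul _ ht).1, hG.pos ht]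
  calc g |a - b| * Real.sign (a - b) * (c ^ q / a ^ (q - 1) - d ^ q / b ^ (q - 1))
      ≤ g |a - b| * (|c - d| ^ q / |a - b| ^ (q - 1)) := by
        rw [mul_assoc]
        exact mul_le_mul_of_nonneg_left
          (Real.sign_sub_mul_rpow_div_sub_le hq1.le ha hb hc hd hab) hgt
    _ ≤ _ := mul_rpow_div_rpow_le_of_monotoneOn_of_antitoneOn hmono hanti hG.apply_zero.ge hG1
          (by linarith) hqpm hpmpp (abs_nonneg _) ht (hmul _ ht).2
end
end

section
/- Let g : [0,∞) → [0,∞) be nondecreasing with g(0) = 0, g of class C¹ on (0,∞), and suppose there exists p > 1 with t g'(t) ≥ (p − 1) g(t) for all t > 0. Fix τ₀ ≥ 0. Then the function h : (0,∞) → ℝ defined by h(τ) = g(|τ − τ₀|)·sign(τ − τ₀) / τ^{p−1} (with h(τ₀) = 0 if τ₀ > 0) is nondecreasing on (0,∞). -/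
/-
Write `r = p - 1` and `φ(t) = g(t) / t^r`. The hypothesis `r g ≤ t g'` says exactly that
`φ' ≥ 0`, so `φ` is nondecreasing and nonnegative on `(0,∞)`. With `s = τ - τ₀`,
`g(|s|) sign(s) / τ^r = sign(s) · φ(|s|) · (|s| / τ)^r`.
For `τ > τ₀` both factors `φ(τ - τ₀)` and `1 - τ₀/τ` grow with `τ` (as `τ₀ ≥ 0`);
for `τ < τ₀` both `φ(τ₀ - τ)` and `τ₀/τ - 1` decrease, and the sign flips this into growth.
-/

open Set

theorem monotoneOn_div_rpow_of_mul_le_mul_deriv {g g' : ℝ → ℝ} {r : ℝ}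
    (hg : ∀ t, 0 < t → HasDerivAt g (g' t) t) (hineq : ∀ t, 0 < t → r * g t ≤ t * g' t) :
    MonotoneOn (fun t => g t / t ^ r) (Ioi 0) := by
  have hderiv : ∀ t ∈ Ioi (0 : ℝ), HasDerivAt (fun t => g t / t ^ r)
      ((g' t * t ^ r - g t * (r * t ^ (r - 1))) / (t ^ r) ^ 2) t := fun t ht =>
    (hg t ht).div (Real.hasDerivAt_rpow_const (Or.inl ht.ne')) (Real.rpow_pos_of_pos ht r).ne'
  refine monotoneOn_of_hasDerivWithinAt_nonneg (convex_Ioi 0)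
    (fun t ht => (hderiv t ht).continuousAt.continuousWithinAt)
    (fun t ht => (hderiv t (interior_subset ht)).hasDerivWithinAt) fun t ht => ?_
  rw [interior_Ioi, mem_Ioi] at ht
  have hnum : g' t * t ^ r - g t * (r * t ^ (r - 1)) = t ^ r / t * (t * g' t - r * g t) := by
    rw [Real.rpow_sub_one ht.ne']
    field_simp
  rw [hnum]
  exact div_nonneg (mul_nonneg (div_nonneg (Real.rpow_nonneg ht.le r) ht.le)
    (sub_nonneg.2 (hineq t ht))) (sq_nonneg _)

theorem monotoneOn_sign_sub_mul {s : Set ℝ} {A : ℝ → ℝ} {c : ℝ} (hA : ∀ x ∈ s, 0 ≤ A x)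
    (hanti : AntitoneOn A (s ∩ Iio c)) (hmono : MonotoneOn A (s ∩ Ioi c)) :
    MonotoneOn (fun x => Real.sign (x - c) * A x) s := by
  intro a ha b hb hab
  by_cases hbc : b < c
  · have hac : a < c := hab.trans_lt hbc
    simp only [Real.sign_of_neg (sub_neg.2 hac), Real.sign_of_neg (sub_neg.2 hbc)]
    linarith [hanti ⟨ha, hac⟩ ⟨hb, hbc⟩ hab]
  by_cases hac : c < a
  · have hbc : c < b := hac.trans_le hab
    simp only [Real.sign_of_pos (sub_pos.2 hac), Real.sign_of_pos (sub_pos.2 hbc), one_mul]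
    exact hmono ⟨ha, hac⟩ ⟨hb, hbc⟩ hab
  have hfa : Real.sign (a - c) * A a ≤ 0 := by
    rcases (not_lt.1 hac).lt_or_eq with hac | rfl
    · simp only [Real.sign_of_neg (sub_neg.2 hac)]
      linarith [hA a ha]
    · simp
  have hfb : 0 ≤ Real.sign (b - c) * A b := by
    rcases (not_lt.1 hbc).lt_or_eq with hbc | rfl
    · simp only [Real.sign_of_pos (sub_pos.2 hbc), one_mul]
      exact hA b hb
    · simp
  exact hfa.trans hfb

theorem sign_mul_div_rpow_eq (g : ℝ → ℝ) (r s : ℝ) {τ : ℝ} (hτ : 0 < τ) :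
    g |s| * Real.sign s / τ ^ r = Real.sign s * (g |s| / |s| ^ r * (|s| / τ) ^ r) := by
  rcases eq_or_ne s 0 with rfl | hs
  · simp
  have hsr : |s| ^ r ≠ 0 := (Real.rpow_pos_of_pos (abs_pos.2 hs) r).ne'
  rw [Real.div_rpow (abs_nonneg s) hτ.le]
  field_simp

theorem MonotoneOn.mul_div_rpow_le {φ : ℝ → ℝ} {r u v a b : ℝ} (hφ : MonotoneOn φ (Ioi 0))
    (hφ₀ : ∀ t, 0 ≤ t → 0 ≤ φ t) (hr : 0 ≤ r) (hu : 0 < u) (huv : u ≤ v) (ha : 0 < a)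
    (hquot : u / a ≤ v / b) : φ u * (u / a) ^ r ≤ φ v * (v / b) ^ r :=
  mul_le_mul (hφ hu (hu.trans_le huv) huv) (Real.rpow_le_rpow (div_pos hu ha).le hquot hr)
    (Real.rpow_nonneg (div_pos hu ha).le r) (hφ₀ v (hu.le.trans huv))

theorem sign_quotient_monotone_general
    (g g' : ℝ → ℝ) (p τ₀ : ℝ)
    (hgnonneg : ∀ t : ℝ, 0 ≤ t → 0 ≤ g t)
    (hgg' : ∀ t : ℝ, 0 < t → HasDerivAt g (g' t) t)
    (hp : 1 < p)
    (hineq : ∀ t : ℝ, 0 < t → (p - 1) * g t ≤ t * g' t)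
    (hτ₀ : 0 ≤ τ₀) :
    MonotoneOn (fun τ : ℝ => g |τ - τ₀| * Real.sign (τ - τ₀) / τ ^ (p - 1))
      (Set.Ioi 0) := by
  set r := p - 1
  have hr : 0 ≤ r := by linarith
  set φ := fun t => g t / t ^ r
  have hφ : MonotoneOn φ (Ioi 0) := monotoneOn_div_rpow_of_mul_le_mul_deriv hgg' hineq
  have hφ₀ : ∀ t, 0 ≤ t → 0 ≤ φ t := fun t ht =>
    div_nonneg (hgnonneg t ht) (Real.rpow_nonneg ht r)
  set A := fun τ => φ |τ - τ₀| * (|τ - τ₀| / τ) ^ r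
  have hA : ∀ τ ∈ Ioi (0 : ℝ), 0 ≤ A τ := fun τ hτ =>
    mul_nonneg (hφ₀ _ (abs_nonneg _))
      (Real.rpow_nonneg (div_nonneg (abs_nonneg _) (le_of_lt hτ)) r)
  have hanti : AntitoneOn A (Ioi 0 ∩ Iio τ₀) := by
    rintro a ⟨ha : 0 < a, haτ : a < τ₀⟩ b ⟨hb : 0 < b, hbτ : b < τ₀⟩ hab
    simp only [A, abs_of_neg (sub_neg.2 haτ), abs_of_neg (sub_neg.2 hbτ), neg_sub]
    refine hφ.mul_div_rpow_le hφ₀ hr (sub_pos.2 hbτ) (by linarith) hb ?_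
    rw [div_le_div_iff₀ hb ha]
    nlinarith
  have hmono : MonotoneOn A (Ioi 0 ∩ Ioi τ₀) := by
    rintro a ⟨ha : 0 < a, haτ : τ₀ < a⟩ b ⟨hb : 0 < b, hbτ : τ₀ < b⟩ hab
    simp only [A, abs_of_pos (sub_pos.2 haτ), abs_of_pos (sub_pos.2 hbτ)]
    refine hφ.mul_div_rpow_le hφ₀ hr (sub_pos.2 haτ) (by linarith) ha ?_
    rw [div_le_div_iff₀ ha hb]
    nlinarith
  exact (monotoneOn_sign_sub_mul hA hanti hmono).congr fun τ hτ =>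
    (sign_mul_div_rpow_eq g r (τ - τ₀) hτ).symm

/-- let `g : [0,∞) → [0,∞)` be nondecreasing with `g 0 = 0`, of class `C¹`
on `(0,∞)` (derivative `g'`), and suppose `t g'(t) ≥ (p − 1) g(t)` for all `t > 0` with
`p > 1`. Then for every fixed `τ₀ ≥ 0`, the function
`τ ↦ g(|τ − τ₀|) · sign(τ − τ₀) / τ^{p−1}` is nondecreasing on `(0,∞)`
(note `sign 0 = 0`, so the value at `τ = τ₀` is `0`). -/
theorem sign_quotient_monotone
    (g g' : ℝ → ℝ) (p τ₀ : ℝ)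
    (hg0 : g 0 = 0)
    (hgnonneg : ∀ t : ℝ, 0 ≤ t → 0 ≤ g t)
    (hgmono : MonotoneOn g (Set.Ici 0))
    (hgg' : ∀ t : ℝ, 0 < t → HasDerivAt g (g' t) t)
    (hg'cont : ContinuousOn g' (Set.Ioi 0))
    (hp : 1 < p)
    (hineq : ∀ t : ℝ, 0 < t → (p - 1) * g t ≤ t * g' t)
    (hτ₀ : 0 ≤ τ₀) :
    MonotoneOn (fun τ : ℝ => g |τ - τ₀| * Real.sign (τ - τ₀) / τ ^ (p - 1))
      (Set.Ioi 0) :=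
  sign_quotient_monotone_general g g' p τ₀ hgnonneg hgg' hp hineq hτ₀
end
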